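/- arXiv:1709.05949 — 6 statements merged into one kernel-verified Lean document; each statement's English description precedes it below -/
import Mathlib

section
/- The only positive integer n such that n divides 2^n - 1 is n = 1. -/
/-!
Let `p` be the least prime factor of `n > 1` and suppose `n ∣ a ^ n - 1`. Modulo `p` both `a ^ n`
and (by Fermat) `a ^ (p - 1)` are `1`, and `n` is coprime to `p - 1` because every prime factor
of `n` is at least `p`; hence `a ≡ 1 [MOD p]`. For `a = 2` this says `p ∣ 1`.
-/

theorem FiniteField.eq_one_of_pow_eq_one_of_coprime {K : Type*} [Field K] [Fintype K] {x : K}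
    (hx : x ≠ 0) {n : ℕ} (hn : x ^ n = 1) (hcop : n.Coprime (Fintype.card K - 1)) : x = 1 := by
  simpa [Nat.Coprime.gcd_eq_one hcop] using
    pow_gcd_eq_one.mpr ⟨hn, FiniteField.pow_card_sub_one_eq_one x hx⟩

theorem Nat.minFac_dvd_sub_one_of_dvd_pow_sub_one {a n : ℕ} (hn : n ≠ 0) (h : n ∣ a ^ n - 1) :
    n.minFac ∣ a - 1 := by
  rcases eq_or_ne n 1 with rfl | hn1
  · simp
  rcases Nat.eq_zero_or_pos a with rfl | ha
  · simp
  set p := n.minFac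
  have hp : p.Prime := Nat.minFac_prime hn1
  have : Fact p.Prime := ⟨hp⟩
  have hpow : (a : ZMod p) ^ n = 1 := by
    have := (Nat.modEq_iff_dvd' (Nat.one_le_pow _ _ ha)).mpr ((Nat.minFac_dvd n).trans h)
    exact_mod_cast ((ZMod.natCast_eq_natCast_iff _ _ _).mpr this).symm
  have ha0 : (a : ZMod p) ≠ 0 := by
    intro h0
    rw [h0, zero_pow hn] at hpow
    exact zero_ne_one hpow
  have hcop : n.Coprime (Fintype.card (ZMod p) - 1) := by
    rw [ZMod.card]
    have := hp.two_le
    exact Nat.coprime_of_lt_minFac (by omega) (by omega)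
  have ha1 := FiniteField.eq_one_of_pow_eq_one_of_coprime ha0 hpow hcop
  refine (Nat.modEq_iff_dvd' ha).mp ((ZMod.natCast_eq_natCast_iff _ _ _).mp ?_)
  simpa using ha1.symm

theorem only_one_divides_two_pow_sub_one (n : ℕ) (hn : 0 < n) (h : n ∣ 2 ^ n - 1) : n = 1 :=
  Nat.minFac_eq_one_iff.mp (Nat.dvd_one.mp (Nat.minFac_dvd_sub_one_of_dvd_pow_sub_one hn.ne' h))
end

section
/- Let G be a finite group and g, x ∈ G elements of the same order such that x * g * x⁻¹ = g^2. Then g = 1. -/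
/-! Conjugating `g` by `x ^ n` gives `g ^ 2 ^ n`; taking `n = orderOf x = orderOf g =: m` yields
`2 ^ m ≡ 1 [MOD m]`. For the least prime factor `p` of `m`, both `2 ^ m` and (Fermat) `2 ^ (p - 1)`
are `1` in `ZMod p`, and `m`, `p - 1` are coprime, so `2 = 1` in `ZMod p`: impossible unless
`m = 1`. -/

theorem ZMod.eq_one_of_pow_eq_one_minFac {n : ℕ} (hn : n ≠ 0) {a : ZMod n.minFac}
    (ha : a ^ n = 1) : a = 1 := by
  rcases eq_or_ne n 1 with rfl | hn1
  · exact (ZMod.subsingleton_iff.2 Nat.minFac_one).elim _ _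
  have hp := Nat.minFac_prime hn1
  have := Fact.mk hp
  have ha0 : a ≠ 0 := by
    rintro rfl
    simp [zero_pow hn] at ha
  have hcop : n.Coprime (n.minFac - 1) :=
    Nat.coprime_of_lt_minFac (by have := hp.two_le; omega) (by have := hp.pos; omega)
  exact (pow_eq_one_iff_of_coprime hcop).1 ⟨ha, ZMod.pow_card_sub_one_eq_one ha0⟩

theorem Nat.eq_one_of_two_pow_modEq_one {n : ℕ} (hn : n ≠ 0) (h : 2 ^ n ≡ 1 [MOD n]) :
    n = 1 := by
  by_contra hn1
  have := Fact.mk (Nat.minFac_prime hn1)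
  have hpow : (2 : ZMod n.minFac) ^ n = 1 := by
    exact_mod_cast (ZMod.natCast_eq_natCast_iff _ _ _).2 (h.of_dvd (Nat.minFac_dvd n))
  have h21 : (2 : ZMod n.minFac) = 1 := ZMod.eq_one_of_pow_eq_one_minFac hn hpow
  exact one_ne_zero (by linear_combination h21 : (1 : ZMod n.minFac) = 0)

theorem pow_mul_mul_inv_pow_eq_pow_pow {G : Type*} [Group G] {g x : G} {k : ℕ}
    (h : x * g * x⁻¹ = g ^ k) (n : ℕ) : x ^ n * g * (x ^ n)⁻¹ = g ^ k ^ n := by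
  induction n with
  | zero => simp
  | succ n ih =>
    calc x ^ (n + 1) * g * (x ^ (n + 1))⁻¹ = x * (x ^ n * g * (x ^ n)⁻¹) * x⁻¹ := by group
      _ = (x * g * x⁻¹) ^ k ^ n := by rw [ih, conj_pow]
      _ = g ^ k ^ (n + 1) := by rw [h, ← pow_mul, pow_succ', mul_comm]

theorem conj_to_square_trivial {G : Type} [Group G] [Finite G] (g x : G)
    (hord : orderOf x = orderOf g) (h : x * g * x⁻¹ = g ^ 2) : g = 1 := by
  have hm : orderOf g ≠ 0 := (isOfFinOrder_of_finite g).orderOf_pos.ne'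
  have hfix : g ^ 2 ^ orderOf g = g ^ 1 := by
    rw [← pow_mul_mul_inv_pow_eq_pow_pow h, ← hord, pow_orderOf_eq_one]
    simp
  exact orderOf_eq_one_iff.1 (Nat.eq_one_of_two_pow_modEq_one hm (pow_eq_pow_iff_modEq.1 hfix))
end

section
/- Every finitely generated infinite group has a just-infinite quotient, i.e. there exists a normal subgroup N of G such that G/N is infinite and every nontrivial normal subgroup of G/N has finite index. -/
/-!
By Zorn's lemma there is a normal subgroup `N` maximal among those with `G ⧸ N` infinite:
the supremum of a chain of such subgroups cannot have finite index, since a finite-index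
subgroup of a finitely generated group is finitely generated (Schreier), and its finitely
many generators would already lie in a single member of the chain. By the correspondence
theorem, maximality of `N` says that every nontrivial normal subgroup of `G ⧸ N` has finite
index.
-/

namespace Subgroup

variable {G : Type*} [Group G]

theorem sSup_mem_of_directedOn_of_fg {c : Set (Subgroup G)} (hne : c.Nonempty)
    (hdir : DirectedOn (· ≤ ·) c) (hfg : (sSup c).FG) : sSup c ∈ c := by
  obtain ⟨T, hT⟩ := hfg
  obtain ⟨K, hKc, hTK⟩ : ∃ K ∈ c, (T : Set G) ⊆ K :=
    hdir.exists_mem_subset_of_finset_subset_biUnion hne fun x hx ↦ by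
      simpa using (mem_sSup_of_directedOn hne hdir).1 (hT ▸ subset_closure hx)
  have hK : K = sSup c := le_antisymm (le_sSup hKc) (hT ▸ (closure_le K).2 hTK)
  exact hK ▸ hKc

theorem infinite_quotient_sSup_of_directedOn [Group.FG G] {c : Set (Subgroup G)}
    (hne : c.Nonempty) (hdir : DirectedOn (· ≤ ·) c) (hinf : ∀ H ∈ c, Infinite (G ⧸ H)) :
    Infinite (G ⧸ sSup c) := by
  by_contra hfin
  have : (sSup c).FiniteIndex :=
    finiteIndex_iff_finite_quotient.2 (not_infinite_iff_finite.1 hfin)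
  have hfg : (sSup c).FG := (Group.fg_iff_subgroup_fg _).1 inferInstance
  exact hfin (hinf _ (sSup_mem_of_directedOn_of_fg hne hdir hfg))

end Subgroup

namespace QuotientGroup

variable {G : Type*} [Group G]

theorem finiteIndex_of_ne_bot_of_forall_gt {N : Subgroup G} [N.Normal]
    (hN : ∀ K : Subgroup G, K.Normal → N < K → K.FiniteIndex)
    {M : Subgroup (G ⧸ N)} (hM : M.Normal) (hMbot : M ≠ ⊥) : M.FiniteIndex := by
  have hsurj := mk'_surjective N
  have hlt : N < M.comap (mk' N) := by
    refine (le_comap_mk' N M).lt_of_ne fun h ↦ hMbot (Subgroup.comap_injective hsurj ?_)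
    rw [← h, MonoidHom.comap_bot, ker_mk']
  have := hN _ (hM.comap _) hlt
  exact ⟨Subgroup.index_comap_of_surjective M hsurj ▸ Subgroup.FiniteIndex.index_ne_zero⟩

end QuotientGroup

/-- Every finitely generated infinite group has a just-infinite quotient. -/
theorem exists_just_infinite_quotient {G : Type} [Group G] (hfg : Group.FG G)
    (hinf : Infinite G) :
    ∃ (N : Subgroup G) (_ : N.Normal),
      Infinite (G ⧸ N) ∧
      ∀ M : Subgroup (G ⧸ N), M.Normal → M ≠ ⊥ → M.FiniteIndex := by
  let S : Set (Subgroup G) := {N | N.Normal ∧ Infinite (G ⧸ N)}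
  have hbot : ⊥ ∈ S := ⟨inferInstance, QuotientGroup.quotientBot.toEquiv.infinite_iff.2 hinf⟩
  have hchain : ∀ c ⊆ S, IsChain (· ≤ ·) c → ∀ H ∈ c, ∃ ub ∈ S, ∀ K ∈ c, K ≤ ub :=
    fun c hcS hc H hH ↦ ⟨sSup c, ⟨Subgroup.sSup_normal c fun K hK ↦ (hcS hK).1,
      Subgroup.infinite_quotient_sSup_of_directedOn ⟨H, hH⟩ hc.directedOn
        fun K hK ↦ (hcS hK).2⟩, fun _ ↦ le_sSup⟩
  obtain ⟨N, -, hNmax⟩ := zorn_le_nonempty₀ S hchain ⊥ hbot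
  obtain ⟨hNnormal, hNinf⟩ := hNmax.prop
  refine ⟨N, hNnormal, hNinf, fun M hM hMbot ↦ ?_⟩
  refine QuotientGroup.finiteIndex_of_ne_bot_of_forall_gt (fun K hK hNK ↦ ?_) hM hMbot
  have hKfin : ¬ Infinite (G ⧸ K) := fun h ↦ hNmax.not_prop_of_gt hNK ⟨hK, h⟩
  exact Subgroup.finiteIndex_iff_finite_quotient.2 (not_infinite_iff_finite.1 hKfin)
end

section
/- Let G be a hereditarily just-infinite group (every finite index subgroup of G is just-infinite, in particular G itself is just-infinite). If G is not residually finite, then the intersection G^(∞) of all finite index subgroups of G is a simple group of finite index in G. -/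
/-!
The finite residual `R` of `G` is normal, so if it is nontrivial it has finite index because `G`
is just-infinite. A finite-index subgroup of `R` then has finite index in `G` and therefore contains
`R`: the group `R` has no proper finite-index subgroups. Since `R` is itself just-infinite, every
nontrivial normal subgroup of `R` has finite index in `R`, hence is all of `R`.
-/

/-- A group is just-infinite if it is infinite and every nontrivial normal
subgroup has finite index. -/
def JustInfinite (G : Type) [Group G] : Prop :=
  Infinite G ∧ ∀ N : Subgroup G, N.Normal → N ≠ ⊥ → N.FiniteIndex

/-- The finite residual: the intersection of all finite-index subgroups. -/
def finiteResidual (G : Type) [Group G] : Subgroup G :=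
  ⨅ (H : Subgroup G) (_ : H.FiniteIndex), H

section

variable {G : Type} [Group G]

theorem mem_finiteResidual_iff {g : G} :
    g ∈ finiteResidual G ↔ ∀ H : Subgroup G, H.FiniteIndex → g ∈ H := by
  simp only [finiteResidual, Subgroup.mem_iInf]

theorem finiteResidual_le (H : Subgroup G) (hH : H.FiniteIndex) : finiteResidual G ≤ H :=
  fun _ hg => mem_finiteResidual_iff.1 hg H hH

theorem finiteResidual_normal : (finiteResidual G).Normal :=
  ⟨fun x hx g => mem_finiteResidual_iff.2 fun H _ =>
    H.normalCore_le <| H.normalCore_normal.conj_mem x (finiteResidual_le _ inferInstance hx) g⟩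

theorem finiteResidual_finiteResidual_eq_top (hR : (finiteResidual G).FiniteIndex) :
    finiteResidual (finiteResidual G) = ⊤ := by
  refine eq_top_iff.2 fun x _ => mem_finiteResidual_iff.2 fun K hK => ?_
  have hKG : (K.map (finiteResidual G).subtype).FiniteIndex :=
    ⟨by rw [Subgroup.index_map_subtype]; exact mul_ne_zero hK.index_ne_zero hR.index_ne_zero⟩
  exact (Subgroup.mem_map_iff_mem (finiteResidual G).subtype_injective).1
    (finiteResidual_le _ hKG x.2)

theorem JustInfinite.of_mulEquiv {H : Type} [Group H] (e : G ≃* H) (hG : JustInfinite G) :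
    JustInfinite H := by
  refine ⟨e.toEquiv.infinite_iff.1 hG.1, fun N hN hN_ne => ⟨?_⟩⟩
  have hNG := hG.2 (N.comap (e : G →* H)) (hN.comap _) fun h =>
    hN_ne (by rw [← Subgroup.map_comap_eq_self_of_surjective (f := (e : G →* H)) e.surjective N,
      h, Subgroup.map_bot])
  rw [← N.index_comap_of_surjective (f := (e : G →* H)) e.surjective]
  exact hNG.index_ne_zero

theorem JustInfinite.isSimpleGroup_of_finiteResidual_eq_top (hG : JustInfinite G)
    (h : finiteResidual G = ⊤) : IsSimpleGroup G :=
  have : Infinite G := hG.1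
  ⟨fun N hN => (eq_or_ne N ⊥).imp_right fun hN_ne =>
    top_le_iff.1 (h ▸ finiteResidual_le N (hG.2 N hN hN_ne))⟩

end

/-- If a hereditarily just-infinite group is not residually finite, then its finite
residual is simple and of finite index. -/
theorem finiteResidual_simple_of_hereditarily_just_infinite {G : Type} [Group G]
    (hhji : ∀ H : Subgroup G, H.FiniteIndex → JustInfinite H)
    (hnrf : finiteResidual G ≠ ⊥) :
    (finiteResidual G).FiniteIndex ∧ IsSimpleGroup (finiteResidual G) := by
  have hG : JustInfinite G := (hhji ⊤ inferInstance).of_mulEquiv Subgroup.topEquiv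
  have hR : (finiteResidual G).FiniteIndex := hG.2 _ finiteResidual_normal hnrf
  exact ⟨hR, (hhji _ hR).isSimpleGroup_of_finiteResidual_eq_top
    (finiteResidual_finiteResidual_eq_top hR)⟩
end

section
/- Let G be a group, H a subgroup, and let C_G(H) be its centralizer and H̄ the closure of H in the profinite topology on G, i.e. the smallest separable subgroup of G containing H. Then the commutator [C_G(H), H̄] is contained in the finite residual G^(∞) of G. -/
/-- A subgroup is separable if it is an intersection of finite-index subgroups. -/
def IsSeparableSubgroup {G : Type} [Group G] (K : Subgroup G) : Prop :=
  ∃ 𝒮 : Set (Subgroup G), (∀ L ∈ 𝒮, L.FiniteIndex) ∧ K = sInf 𝒮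

/-- The profinite closure of a subgroup: the smallest separable subgroup containing it. -/
def profiniteClosure {G : Type} [Group G] (H : Subgroup G) : Subgroup G :=
  sInf {K : Subgroup G | IsSeparableSubgroup K ∧ H ≤ K}

/-- The commutator of the centralizer of H with the profinite closure of H is
contained in the finite residual. -/
theorem commutator_centralizer_profiniteClosure_le_finiteResidual
    {G : Type} [Group G] (H : Subgroup G) :
    ⁅Subgroup.centralizer (H : Set G), profiniteClosure H⁆ ≤ finiteResidual G := by
  rw [Subgroup.commutator_le]
  intro c hc k hk
  simp only [finiteResidual, Subgroup.mem_iInf]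
  intro N hN
  -- work in the finite quotient by the normal core of N
  haveI := hN
  haveI : N.normalCore.FiniteIndex := Subgroup.finiteIndex_normalCore N
  haveI : Finite (G ⧸ N.normalCore) := Subgroup.finite_quotient_of_finiteIndex
  set π := QuotientGroup.mk' N.normalCore with hπ
  set M : Subgroup G := (Subgroup.centralizer {π c}).comap π with hM
  have hMfi : M.FiniteIndex := by
    constructor
    rw [hM, Subgroup.index_comap_of_surjective _ (QuotientGroup.mk'_surjective _)]
    exact Subgroup.index_ne_zero_of_finite
  have hHM : H ≤ M := by
    intro h hh
    simp only [hM, Subgroup.mem_comap, Subgroup.mem_centralizer_iff,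
      Set.mem_singleton_iff, forall_eq]
    rw [← map_mul, ← map_mul, hc h hh]
  have hsep : IsSeparableSubgroup M := ⟨{M}, by simpa using hMfi, by simp⟩
  have hkM : k ∈ M := by
    have := hk
    rw [profiniteClosure, Subgroup.mem_sInf] at this
    exact this M ⟨hsep, hHM⟩
  -- now π c and π k commute, i.e. ⁅c, k⁆ ∈ normalCore ≤ N
  simp only [hM, Subgroup.mem_comap, Subgroup.mem_centralizer_iff,
    Set.mem_singleton_iff, forall_eq] at hkM
  open scoped commutatorElement in
  have : π ⁅c, k⁆ = 1 := by
    rw [commutatorElement_def]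
    simp only [map_mul, map_inv]
    rw [hkM]
    group
  open scoped commutatorElement in
  have hcore : ⁅c, k⁆ ∈ N.normalCore := (QuotientGroup.eq_one_iff _).mp this
  exact N.normalCore_le hcore
end

section
/- For a vertex-transitive automorphism group Γ of a connected locally finite graph and any vertex v and any n ≥ 0: the pointwise stabilizer of the n-ball around v is trivial if and only if it is contained in the pointwise stabilizer of the (n+1)-ball around v. -/
/-!
Γ acts by graph automorphisms, so conjugating by `g` carries `Γ_v^[r]` onto `Γ_{g v}^[r]`; by
transitivity the inclusion `Γ_v^[n] ≤ Γ_v^[n+1]` therefore holds at every vertex. For adjacent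
`x, y` the `n`-ball about `y` lies in the `(n+1)`-ball about `x`, so `Γ_x^[n] ≤ Γ_x^[n+1] ≤ Γ_y^[n]`.
By connectedness `Γ_v^[n]` fixes every vertex, and faithfulness makes it trivial.
-/

open MulAction Pointwise

theorem MulAction.iInf_stabilizer_eq_fixingSubgroup {Γ α : Type*} [Group Γ] [MulAction Γ α]
    (s : Set α) : ⨅ a ∈ s, stabilizer Γ a = fixingSubgroup Γ s := by
  ext γ
  simp [Subgroup.mem_iInf, mem_fixingSubgroup_iff]

namespace SimpleGraph

variable {V W : Type*} {G : SimpleGraph V} {G' : SimpleGraph W}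

theorem Hom.edist_map_le (f : G →g G') (u v : V) : G'.edist (f u) (f v) ≤ G.edist u v := by
  by_cases hr : G.Reachable u v
  · obtain ⟨p, hp⟩ := hr.exists_walk_length_eq_edist
    rw [← hp, ← Walk.length_map f]
    exact edist_le _
  · exact edist_eq_top_of_not_reachable hr ▸ le_top

theorem Iso.edist_map (f : G ≃g G') (u v : V) : G'.edist (f u) (f v) = G.edist u v :=
  le_antisymm (f.toHom.edist_map_le u v) (by simpa using f.symm.toHom.edist_map_le (f u) (f v))

theorem Iso.dist_map (f : G ≃g G') (u v : V) : G'.dist (f u) (f v) = G.dist u v := by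
  simp only [dist, f.edist_map]

variable {Γ : Type*} [Group Γ] [MulAction Γ V]

def smulIso (hadj : ∀ (g : Γ) (u w : V), G.Adj u w → G.Adj (g • u) (g • w)) (g : Γ) :
    G ≃g G where
  toEquiv := MulAction.toPerm g
  map_rel_iff' := ⟨fun h => by simpa using hadj g⁻¹ _ _ h, hadj g _ _⟩

theorem dist_smul_smul (hadj : ∀ (g : Γ) (u w : V), G.Adj u w → G.Adj (g • u) (g • w))
    (g : Γ) (u w : V) : G.dist (g • u) (g • w) = G.dist u w :=
  (smulIso hadj g).dist_map u w

theorem smul_setOf_dist_le (hadj : ∀ (g : Γ) (u w : V), G.Adj u w → G.Adj (g • u) (g • w))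
    (g : Γ) (v : V) (n : ℕ) : g • {w | G.dist v w ≤ n} = {w | G.dist (g • v) w ≤ n} := by
  ext w
  rw [Set.mem_smul_set_iff_inv_smul_mem, Set.mem_ofPred_eq, Set.mem_ofPred_eq,
    ← dist_smul_smul hadj g, smul_inv_smul]

variable (Γ G) in
/-- `Γ_v^[n]`; note that `G.dist` is `0` between vertices in different components. -/
abbrev ballFixer (v : V) (n : ℕ) : Subgroup Γ :=
  fixingSubgroup Γ {w | G.dist v w ≤ n}

theorem ballFixer_le_stabilizer (v : V) (n : ℕ) : G.ballFixer Γ v n ≤ stabilizer Γ v :=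
  fun _ hγ => (mem_fixingSubgroup_iff Γ).mp hγ v (by simp)

theorem ballFixer_smul (hadj : ∀ (g : Γ) (u w : V), G.Adj u w → G.Adj (g • u) (g • w))
    (g : Γ) (v : V) (n : ℕ) :
    G.ballFixer Γ (g • v) n = (G.ballFixer Γ v n).map (MulAut.conj g).toMonoidHom := by
  rw [ballFixer, ← smul_setOf_dist_le hadj]
  exact SubMulAction.fixingSubgroup_smul_eq_fixingSubgroup_map_conj _ _

theorem ballFixer_succ_le_of_adj (hconn : G.Connected) {x y : V} (hxy : G.Adj x y) (n : ℕ) :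
    G.ballFixer Γ x (n + 1) ≤ G.ballFixer Γ y n := by
  refine fixingSubgroup_antitone Γ V fun w (hw : G.dist y w ≤ n) => ?_
  calc G.dist x w ≤ G.dist x y + G.dist y w := hconn.dist_triangle
    _ ≤ n + 1 := by rw [dist_eq_one_iff_adj.mpr hxy]; omega

theorem ballFixer_le_succ_of_isPretransitive [IsPretransitive Γ V]
    (hadj : ∀ (g : Γ) (u w : V), G.Adj u w → G.Adj (g • u) (g • w)) {v : V} {n : ℕ}
    (h : G.ballFixer Γ v n ≤ G.ballFixer Γ v (n + 1)) (u : V) :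
    G.ballFixer Γ u n ≤ G.ballFixer Γ u (n + 1) := by
  obtain ⟨g, rfl⟩ := exists_smul_eq Γ v u
  rw [ballFixer_smul hadj, ballFixer_smul hadj]
  exact Subgroup.map_mono h

theorem ballFixer_le_of_reachable {n : ℕ} (hconn : G.Connected)
    (h : ∀ u : V, G.ballFixer Γ u n ≤ G.ballFixer Γ u (n + 1)) {a b : V}
    (hab : G.Reachable a b) : G.ballFixer Γ a n ≤ G.ballFixer Γ b n := by
  obtain ⟨p⟩ := hab
  induction p with
  | nil => exact le_rfl
  | cons hxy _ ih => exact ((h _).trans (ballFixer_succ_le_of_adj hconn hxy n)).trans ih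

theorem ballFixer_eq_bot_of_forall_le_succ [FaithfulSMul Γ V] {n : ℕ} (hconn : G.Connected)
    (h : ∀ u : V, G.ballFixer Γ u n ≤ G.ballFixer Γ u (n + 1)) (v : V) :
    G.ballFixer Γ v n = ⊥ := by
  refine (Subgroup.eq_bot_iff_forall _).mpr fun γ hγ => eq_of_smul_eq_smul (α := V) fun u => ?_
  have hu : γ ∈ stabilizer Γ u :=
    ballFixer_le_stabilizer u n (ballFixer_le_of_reachable hconn h (hconn v u) hγ)
  simpa using hu

end SimpleGraph

theorem ball_stabilizer_trivial_iff_general {V Γ : Type} [Group Γ] [MulAction Γ V]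
    [FaithfulSMul Γ V] (G : SimpleGraph V) (hconn : G.Connected)
    (hadj : ∀ (g : Γ) (u w : V), G.Adj u w → G.Adj (g • u) (g • w))
    (htrans : ∀ u w : V, ∃ g : Γ, g • u = w)
    (v : V) (n : ℕ) :
    (⨅ w ∈ {w : V | G.dist v w ≤ n}, MulAction.stabilizer Γ w) = ⊥ ↔
    (⨅ w ∈ {w : V | G.dist v w ≤ n}, MulAction.stabilizer Γ w) ≤
      ⨅ w ∈ {w : V | G.dist v w ≤ n + 1}, MulAction.stabilizer Γ w := by
  have : MulAction.IsPretransitive Γ V := ⟨htrans⟩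
  simp only [MulAction.iInf_stabilizer_eq_fixingSubgroup]
  change G.ballFixer Γ v n = ⊥ ↔ G.ballFixer Γ v n ≤ G.ballFixer Γ v (n + 1)
  refine ⟨fun h => h ▸ bot_le, fun h => ?_⟩
  exact SimpleGraph.ballFixer_eq_bot_of_forall_le_succ hconn
    (SimpleGraph.ballFixer_le_succ_of_isPretransitive hadj h) v

/-- For a vertex-transitive automorphism group of a connected locally finite graph,
the pointwise stabilizer of the n-ball around a vertex v is trivial iff it is
contained in the pointwise stabilizer of the (n+1)-ball. -/
theorem ball_stabilizer_trivial_iff {V Γ : Type} [Group Γ] [MulAction Γ V]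
    [FaithfulSMul Γ V] (G : SimpleGraph V) (hconn : G.Connected)
    (hlf : G.LocallyFinite)
    (hadj : ∀ (g : Γ) (u w : V), G.Adj u w → G.Adj (g • u) (g • w))
    (htrans : ∀ u w : V, ∃ g : Γ, g • u = w)
    (v : V) (n : ℕ) :
    (⨅ w ∈ {w : V | G.dist v w ≤ n}, MulAction.stabilizer Γ w) = ⊥ ↔
    (⨅ w ∈ {w : V | G.dist v w ≤ n}, MulAction.stabilizer Γ w) ≤
      ⨅ w ∈ {w : V | G.dist v w ≤ n + 1}, MulAction.stabilizer Γ w :=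
  ball_stabilizer_trivial_iff_general G hconn hadj htrans v n
end
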